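/- For the map C₋, a fixed point (y₀,y₀) has differential with trace -2 (double eigenvalue -1) if and only if M₁² = (4/27)(2+M₂)(4-M₂)², which requires M₂ ≥ -2. -/

import Mathlib

/-! The trace condition `M₂ - 3y₀² = -2` says `y₀² = (M₂ + 2)/3`; substituting it into the
fixed-point equation leaves the linear relation `M₁ = (2(4 - M₂)/3) y₀`. Squaring eliminates
`y₀`, and conversely `y₀ = M₁ / (2(4 - M₂)/3)` (or `√((M₂ + 2)/3)` when `M₂ = 4`) recovers a
fixed point. -/

theorem exists_sq_eq_and_eq_mul_iff {c k x : ℝ} (hc : 0 ≤ c) :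
    (∃ y, y ^ 2 = c ∧ x = k * y) ↔ x ^ 2 = k ^ 2 * c := by
  constructor
  · rintro ⟨y, rfl, rfl⟩
    ring
  · intro h
    rcases eq_or_ne k 0 with rfl | hk
    · exact ⟨√c, Real.sq_sqrt hc, by simpa using h⟩
    · refine ⟨x / k, ?_, by field_simp⟩
      rw [div_pow, h]
      field_simp

theorem fixed_point_trace_neg_two_iff (M₁ M₂ y : ℝ) :
    (-y ^ 3 + (M₂ - 2) * y + M₁ = 0 ∧ M₂ - 3 * y ^ 2 = -2) ↔
      (y ^ 2 = (M₂ + 2) / 3 ∧ M₁ = 2 * (4 - M₂) / 3 * y) := by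
  constructor
  · rintro ⟨h_fix, h_trace⟩
    have hy : y ^ 2 = (M₂ + 2) / 3 := by linear_combination -h_trace / 3
    exact ⟨hy, by linear_combination h_fix + y * hy⟩
  · rintro ⟨hy, hM₁⟩
    exact ⟨by linear_combination hM₁ - y * hy, by linear_combination -3 * hy⟩

theorem neg_two_le_of_sq_eq {M₁ M₂ : ℝ}
    (h : M₁ ^ 2 = 4 / 27 * (2 + M₂) * (4 - M₂) ^ 2) : -2 ≤ M₂ := by
  by_contra! hlt
  have : 0 < (4 - M₂) ^ 2 := by nlinarith
  nlinarith [sq_nonneg M₁]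

/-- For `C₋`: a fixed point `(y₀,y₀)` has differential with trace `-2` (double
eigenvalue `-1`) iff `M₁² = (4/27)(2+M₂)(4-M₂)²`, which requires `M₂ ≥ -2`. -/
theorem cubic_henon_minus_period_doubling_curve (M₁ M₂ : ℝ) :
    ((∃ y₀ : ℝ, -y₀ ^ 3 + (M₂ - 2) * y₀ + M₁ = 0 ∧ M₂ - 3 * y₀ ^ 2 = -2) ↔
      M₁ ^ 2 = 4 / 27 * (2 + M₂) * (4 - M₂) ^ 2) ∧
    ((∃ y₀ : ℝ, -y₀ ^ 3 + (M₂ - 2) * y₀ + M₁ = 0 ∧ M₂ - 3 * y₀ ^ 2 = -2) →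
      -2 ≤ M₂) := by
  simp_rw [fixed_point_trace_neg_two_iff]
  have curve_iff (hM₂ : -2 ≤ M₂) :
      (∃ y, y ^ 2 = (M₂ + 2) / 3 ∧ M₁ = 2 * (4 - M₂) / 3 * y) ↔
        M₁ ^ 2 = 4 / 27 * (2 + M₂) * (4 - M₂) ^ 2 := by
    rw [exists_sq_eq_and_eq_mul_iff (by linarith)]
    ring_nf
  have neg_two_le :
      (∃ y, y ^ 2 = (M₂ + 2) / 3 ∧ M₁ = 2 * (4 - M₂) / 3 * y) → -2 ≤ M₂ :=
    fun ⟨y, hy, _⟩ => by nlinarith [sq_nonneg y]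
  exact ⟨⟨fun h => (curve_iff (neg_two_le h)).1 h,
    fun h => (curve_iff (neg_two_le_of_sq_eq h)).2 h⟩, neg_two_le⟩
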